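/- Fréchet Cauchy–Riemann conditions (sufficiency): let 𝓗 be a real Hilbert space and T : 𝓗 × 𝓗 → ℂ with T = T₁ + i T₂, where T₁, T₂ are real valued. Suppose T₁ and T₂ are Fréchet differentiable at c = (c₁,c₂) with partial gradients satisfying the Fréchet Cauchy–Riemann conditions ∇₁T₁(c) = ∇₂T₂(c) and ∇₂T₁(c) = −∇₁T₂(c). Then T is Fréchet complex differentiable at c: there exists w ∈ 𝓗 × 𝓗 with (T(c+h) − T(c) − ⟨h, w⟩_ℍ)/‖h‖_ℍ → 0 as h → 0; moreover w is the element of 𝓗 × 𝓗 representing the complex conjugate of ∇₁T₁(c) + i ∇₁T₂(c), i.e. w = (∇₁T₁(c), −∇₁T₂(c)). -/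

import Mathlib

open Complex Filter Asymptotics Topology

variable {𝓗 : Type*} [NormedAddCommGroup 𝓗] [InnerProductSpace ℝ 𝓗]

/-- The complex inner product on `ℍ = 𝓗 × 𝓗` (elements `(u, v)` representing `u + iv`):
`⟨f, g⟩_ℍ = ⟨u_f,u_g⟩ + ⟨v_f,v_g⟩ + i (⟨v_f,u_g⟩ - ⟨u_f,v_g⟩)`. -/
noncomputable def cinner (f g : 𝓗 × 𝓗) : ℂ :=
  ((inner ℝ f.1 g.1 + inner ℝ f.2 g.2 : ℝ) : ℂ)
    + ((inner ℝ f.2 g.1 - inner ℝ f.1 g.2 : ℝ) : ℂ) * Complex.I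

/-- The norm on `ℍ = 𝓗 × 𝓗`: `‖(h₁, h₂)‖_ℍ = √(‖h₁‖² + ‖h₂‖²)`. -/
noncomputable def hnorm (h : 𝓗 × 𝓗) : ℝ :=
  Real.sqrt (‖h.1‖ ^ 2 + ‖h.2‖ ^ 2)

/-! The real derivatives of `Re T` and `Im T` assemble into a real derivative of `T`; the
Cauchy–Riemann conditions say precisely that this derivative is `h ↦ ⟨h, (a₁, -b₁)⟩_ℍ`. Since the
product norm `max ‖h₁‖ ‖h₂‖` is dominated by `‖h‖_ℍ`, the Fréchet remainder is `o(‖h‖_ℍ)`. -/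

theorem hasFDerivAt_of_re_im {E : Type*} [NormedAddCommGroup E] [NormedSpace ℝ E]
    {f : E → ℂ} {L₁ L₂ : E →L[ℝ] ℝ} {x : E}
    (h₁ : HasFDerivAt (fun p => (f p).re) L₁ x) (h₂ : HasFDerivAt (fun p => (f p).im) L₂ x) :
    HasFDerivAt f (ofRealCLM.comp L₁ + I • ofRealCLM.comp L₂) x := by
  refine ((ofRealCLM.hasFDerivAt.comp x h₁).add
    ((ofRealCLM.hasFDerivAt.comp x h₂).const_smul I)).congr_of_eventuallyEq
    (.of_forall fun p => ?_)
  simp [mul_comm I, re_add_im]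

theorem cinner_mk_neg (h : 𝓗 × 𝓗) (a b : 𝓗) :
    cinner h (a, -b) = ((inner ℝ h.1 a + inner ℝ h.2 (-b) : ℝ) : ℂ)
      + I * ((inner ℝ h.1 b + inner ℝ h.2 a : ℝ) : ℂ) := by
  simp only [cinner, inner_neg_right, sub_neg_eq_add]
  ring_nf

theorem norm_le_hnorm {E : Type*} [NormedAddCommGroup E] (h : E × E) : ‖h‖ ≤ hnorm h :=
  max_le (Real.le_sqrt_of_sq_le (by nlinarith [sq_nonneg ‖h.2‖]))
    (Real.le_sqrt_of_sq_le (by nlinarith [sq_nonneg ‖h.1‖]))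

theorem isBigO_hnorm {E : Type*} [NormedAddCommGroup E] (l : Filter (E × E)) :
    (fun h => h) =O[l] hnorm :=
  isBigO_of_le l fun h => (norm_le_hnorm h).trans (Real.le_norm_self _)

theorem frechet_complex_differentiable_of_cauchy_riemann_general
    (T : 𝓗 × 𝓗 → ℂ) (c : 𝓗 × 𝓗) (a₁ a₂ b₁ b₂ : 𝓗)
    (hd1 : DifferentiableAt ℝ (fun p => (T p).re) c)
    (hd2 : DifferentiableAt ℝ (fun p => (T p).im) c)
    (hg1 : ∀ h : 𝓗 × 𝓗,
      fderiv ℝ (fun p => (T p).re) c h = (inner ℝ h.1 a₁ : ℝ) + (inner ℝ h.2 a₂ : ℝ))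
    (hg2 : ∀ h : 𝓗 × 𝓗,
      fderiv ℝ (fun p => (T p).im) c h = (inner ℝ h.1 b₁ : ℝ) + (inner ℝ h.2 b₂ : ℝ))
    (hcr1 : a₁ = b₂) (hcr2 : a₂ = -b₁) :
    (fun h : 𝓗 × 𝓗 => T (c + h) - T c - cinner h (a₁, -b₁))
      =o[𝓝 (0 : 𝓗 × 𝓗)] fun h => hnorm h := by
  subst hcr1 hcr2
  have hT := hasFDerivAt_of_re_im hd1.hasFDerivAt hd2.hasFDerivAt
  refine ((hasFDerivAt_iff_isLittleO_nhds_zero.mp hT).trans_isBigO (isBigO_hnorm _)).congr_left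
    fun h => ?_
  simp [hg1, hg2, cinner_mk_neg]

/-- **Fréchet Cauchy–Riemann conditions (sufficiency).** Let `T : 𝓗 × 𝓗 → ℂ` with real and
imaginary parts `T₁, T₂`, both Fréchet differentiable at `c`, having partial gradients
`∇₁T₁ c = a₁`, `∇₂T₁ c = a₂`, `∇₁T₂ c = b₁`, `∇₂T₂ c = b₂` satisfying the Fréchet
Cauchy–Riemann conditions `a₁ = b₂` and `a₂ = -b₁`. Then `T` is Fréchet complex
differentiable at `c` with `w = (a₁, -b₁)` (representing the conjugate of `a₁ + i b₁`):
`(T (c+h) - T c - ⟨h, w⟩_ℍ) / ‖h‖_ℍ → 0` as `h → 0`. -/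
theorem frechet_complex_differentiable_of_cauchy_riemann [CompleteSpace 𝓗]
    (T : 𝓗 × 𝓗 → ℂ) (c : 𝓗 × 𝓗) (a₁ a₂ b₁ b₂ : 𝓗)
    (hd1 : DifferentiableAt ℝ (fun p => (T p).re) c)
    (hd2 : DifferentiableAt ℝ (fun p => (T p).im) c)
    (hg1 : ∀ h : 𝓗 × 𝓗,
      fderiv ℝ (fun p => (T p).re) c h = (inner ℝ h.1 a₁ : ℝ) + (inner ℝ h.2 a₂ : ℝ))
    (hg2 : ∀ h : 𝓗 × 𝓗,
      fderiv ℝ (fun p => (T p).im) c h = (inner ℝ h.1 b₁ : ℝ) + (inner ℝ h.2 b₂ : ℝ))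
    (hcr1 : a₁ = b₂) (hcr2 : a₂ = -b₁) :
    (fun h : 𝓗 × 𝓗 => T (c + h) - T c - cinner h (a₁, -b₁))
      =o[𝓝 (0 : 𝓗 × 𝓗)] fun h => hnorm h :=
  frechet_complex_differentiable_of_cauchy_riemann_general T c a₁ a₂ b₁ b₂ hd1 hd2 hg1 hg2 hcr1 hcr2
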